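/- Combining the union bound with the Hoeffding-type bound: if $\mathbf{u}$ has independent bits with per-bit disagreement probabilities $q_i = \Pr[u_i \ne c_{j,i}]$, and for every $l \ne j$ the sum $\sum_{i \in D_{jl}} q_i < |D_{jl}|/2$ where $D_{jl} = \{i : c_{j,i} \ne c_{l,i}\}$, then the misclassification probability satisfies $P_e \le \sum_{l \ne j}\big(1 - \lambda_{jl}^2\big)^{|D_{jl}|/2}$ with $\lambda_{jl} = \frac{1}{|D_{jl}|}\sum_{i \in D_{jl}}(2q_i - 1)$. -/

import Mathlib

/-!
If `u` is decoded to `c l` rather than `c j`, then `u` disagrees with `c j` on at least half of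
the positions `D` where the two codewords differ. The disagreement indicators are independent,
`[0, 1]`-valued, with average mean `a = (1 + λ) / 2 < 1 / 2`. By convexity of `exp` and AM-GM
the moment generating function of their sum is at most `(1 - a + a e^t) ^ |D|`, and the Chernoff
bound at `t = log ((1 - a) / a)` gives `(4 a (1 - a)) ^ (|D| / 2) = (1 - λ ^ 2) ^ (|D| / 2)`.
The union bound over `l ≠ j` finishes the proof.
-/

open MeasureTheory ProbabilityTheory Real Finset Filter

lemma Real.prod_le_arith_mean_pow {ι : Type*} (s : Finset ι) (z : ι → ℝ)
    (hz : ∀ i ∈ s, 0 ≤ z i) :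
    ∏ i ∈ s, z i ≤ ((∑ i ∈ s, z i) / #s) ^ #s := by
  rcases s.eq_empty_or_nonempty with rfl | hs
  · simp
  have hk : (#s : ℝ) ≠ 0 := by positivity
  have hgm := geom_mean_le_arith_mean_weighted s (fun _ ↦ (#s : ℝ)⁻¹) z
    (fun _ _ ↦ by positivity) (by simp [hk]) hz
  rw [← mul_sum, ← div_eq_inv_mul] at hgm
  calc ∏ i ∈ s, z i = (∏ i ∈ s, z i ^ (#s : ℝ)⁻¹) ^ #s := by
        rw [← prod_pow]
        refine prod_congr rfl fun i hi ↦ ?_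
        rw [← rpow_natCast, ← rpow_mul (hz i hi), inv_mul_cancel₀ hk, rpow_one]
    _ ≤ ((∑ i ∈ s, z i) / #s) ^ #s := by
        gcongr
        exact prod_nonneg fun i hi ↦ rpow_nonneg (hz i hi) _

lemma Real.exp_mul_le_one_sub_add_mul_exp {x : ℝ} (hx : x ∈ Set.Icc 0 1) (t : ℝ) :
    exp (t * x) ≤ 1 - x + x * exp t := by
  have := convexOn_exp.2 (Set.mem_univ 0) (Set.mem_univ t) (sub_nonneg.2 hx.2) hx.1
    (sub_add_cancel 1 x)
  simpa [mul_comm x t] using this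

section

variable {Ω ι : Type*} [MeasurableSpace Ω] {μ : Measure Ω} [IsProbabilityMeasure μ]

lemma ProbabilityTheory.mgf_le_of_mem_Icc {X : Ω → ℝ} (hX : Measurable X)
    (hX01 : ∀ ω, X ω ∈ Set.Icc 0 1) (t : ℝ) :
    mgf X μ t ≤ 1 - μ[X] + μ[X] * exp t := by
  have hXint : Integrable X μ :=
    .of_bound hX.aestronglyMeasurable 1 (.of_forall fun ω ↦ by
      simpa [abs_of_nonneg (hX01 ω).1] using (hX01 ω).2)
  calc mgf X μ t ≤ μ[fun ω ↦ 1 - X ω + X ω * exp t] := by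
        refine integral_mono_of_nonneg (.of_forall fun _ ↦ (exp_pos _).le) ?_
          (.of_forall fun ω ↦ exp_mul_le_one_sub_add_mul_exp (hX01 ω) t)
        exact ((integrable_const 1).sub hXint).add (hXint.mul_const _)
    _ = 1 - μ[X] + μ[X] * exp t := by
        have h1 : Integrable (fun ω ↦ 1 - X ω) μ := (integrable_const 1).sub hXint
        rw [integral_add h1 (hXint.mul_const _), integral_sub (integrable_const 1) hXint,
          integral_mul_const]
        simp

lemma ProbabilityTheory.iIndepFun.mgf_sum_le_of_mem_Icc {X : ι → Ω → ℝ}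
    (hindep : iIndepFun X μ) (hmeas : ∀ i, Measurable (X i))
    (hX01 : ∀ i ω, X i ω ∈ Set.Icc 0 1) (s : Finset ι) (t : ℝ) :
    mgf (∑ i ∈ s, X i) μ t ≤
      (1 - (∑ i ∈ s, μ[X i]) / #s + (∑ i ∈ s, μ[X i]) / #s * exp t) ^ #s := by
  rcases s.eq_empty_or_nonempty with rfl | hs
  · simp
  have hmean_nonneg : ∀ i, 0 ≤ μ[X i] := fun i ↦ integral_nonneg fun ω ↦ (hX01 i ω).1
  have hmean_le_one : ∀ i, μ[X i] ≤ 1 := fun i ↦ by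
    simpa using integral_mono_of_nonneg (.of_forall fun ω ↦ (hX01 i ω).1)
      (integrable_const (μ := μ) 1)
      (.of_forall fun ω ↦ (hX01 i ω).2)
  have hterm_nonneg : ∀ i ∈ s, 0 ≤ 1 - μ[X i] + μ[X i] * exp t := fun i _ ↦ by
    nlinarith [hmean_nonneg i, hmean_le_one i, exp_pos t]
  calc mgf (∑ i ∈ s, X i) μ t = ∏ i ∈ s, mgf (X i) μ t := hindep.mgf_sum hmeas s
    _ ≤ ∏ i ∈ s, (1 - μ[X i] + μ[X i] * exp t) :=
        prod_le_prod (fun _ _ ↦ mgf_nonneg) fun i _ ↦ mgf_le_of_mem_Icc (hmeas i) (hX01 i) t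
    _ ≤ ((∑ i ∈ s, (1 - μ[X i] + μ[X i] * exp t)) / #s) ^ #s :=
        prod_le_arith_mean_pow s _ hterm_nonneg
    _ = _ := by
        congr 1
        rw [sum_add_distrib, sum_sub_distrib, ← sum_mul]
        field_simp
        simp

lemma ProbabilityTheory.iIndepFun.measureReal_sum_ge_le_exp_mul_pow {X : ι → Ω → ℝ}
    (hindep : iIndepFun X μ) (hmeas : ∀ i, Measurable (X i))
    (hX01 : ∀ i ω, X i ω ∈ Set.Icc 0 1) (s : Finset ι) (ε : ℝ) {t : ℝ} (ht : 0 ≤ t) :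
    μ.real {ω | ε ≤ ∑ i ∈ s, X i ω} ≤
      exp (-t * ε) * (1 - (∑ i ∈ s, μ[X i]) / #s + (∑ i ∈ s, μ[X i]) / #s * exp t) ^ #s := by
  have hint : ∀ i ∈ s, Integrable (fun ω ↦ exp (t * X i ω)) μ := fun i _ ↦
    .of_bound (by fun_prop) (exp t) (.of_forall fun ω ↦ by
      rw [norm_of_nonneg (exp_pos _).le, exp_le_exp]
      nlinarith [(hX01 i ω).2])
  have hchernoff := measure_ge_le_exp_mul_mgf ε ht (hindep.integrable_exp_mul_sum hmeas hint)
  simp only [Finset.sum_apply] at hchernoff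
  exact hchernoff.trans (by gcongr; exact hindep.mgf_sum_le_of_mem_Icc hmeas hX01 s t)

lemma Real.exp_neg_mul_half_mul_pow_eq_of_exp_eq {a t : ℝ} (ha0 : 0 < a) (ha1 : a < 1)
    (ht : exp t = (1 - a) / a) (k : ℕ) :
    exp (-t * (k / 2)) * (1 - a + a * exp t) ^ k = (4 * a * (1 - a)) ^ ((k : ℝ) / 2) := by
  have h1a : 0 < 1 - a := by linarith
  have hexp : exp (-t * (k / 2)) = (a / (1 - a)) ^ ((k : ℝ) / 2) := by
    rw [rpow_def_of_pos (by positivity), ← inv_div (1 - a) a, log_inv, ← ht, log_exp, neg_mul]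
  have hpow : (1 - a + a * exp t) ^ k = ((2 * (1 - a)) ^ 2) ^ ((k : ℝ) / 2) := by
    rw [ht, mul_div_cancel₀ _ ha0.ne', ← rpow_two, ← rpow_mul (by positivity), ← rpow_natCast]
    congr 1 <;> ring
  rw [hexp, hpow, ← mul_rpow (by positivity) (by positivity)]
  congr 1
  field_simp
  ring

lemma ProbabilityTheory.iIndepFun.measureReal_sum_ge_half_card_le {X : ι → Ω → ℝ}
    (hindep : iIndepFun X μ) (hmeas : ∀ i, Measurable (X i))
    (hX01 : ∀ i ω, X i ω ∈ Set.Icc 0 1) {s : Finset ι} (hs : ∑ i ∈ s, μ[X i] < (#s : ℝ) / 2) :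
    μ.real {ω | (#s : ℝ) / 2 ≤ ∑ i ∈ s, X i ω} ≤
      (1 - ((∑ i ∈ s, (2 * μ[X i] - 1)) / #s) ^ 2) ^ ((#s : ℝ) / 2) := by
  set a : ℝ := (∑ i ∈ s, μ[X i]) / #s with ha
  have hsum_nonneg : 0 ≤ ∑ i ∈ s, μ[X i] :=
    sum_nonneg fun i _ ↦ integral_nonneg fun ω ↦ (hX01 i ω).1
  have hk : (0 : ℝ) < #s := by linarith
  have ha0 : 0 ≤ a := div_nonneg hsum_nonneg hk.le
  have ha_half : a < 1 / 2 := by rwa [ha, div_lt_iff₀ hk, one_div_mul_eq_div]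
  have hlam : 1 - ((∑ i ∈ s, (2 * μ[X i] - 1)) / #s) ^ 2 = 4 * a * (1 - a) := by
    rw [ha, sum_sub_distrib, ← mul_sum, sum_const, nsmul_one]
    field_simp
    ring
  have hchernoff := fun t (ht : 0 ≤ t) ↦
    hindep.measureReal_sum_ge_le_exp_mul_pow hmeas hX01 s ((#s : ℝ) / 2) ht
  rw [← ha] at hchernoff
  rw [hlam]
  rcases ha0.eq_or_lt with ha_zero | ha_pos
  · -- Letting `t → ∞` in the Chernoff bound, whose base `1 - a + a e^t` is then `1`.
    rw [← ha_zero, mul_zero, zero_mul, zero_rpow (by positivity)]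
    have hlim : Tendsto (fun t ↦ exp (-t * (#s / 2))) atTop (nhds 0) :=
      tendsto_exp_atBot.comp (tendsto_neg_atTop_atBot.atBot_mul_const (by positivity))
    refine ge_of_tendsto hlim (eventually_ge_atTop 0 |>.mono fun t ht ↦ ?_)
    simpa [← ha_zero] using hchernoff t ht
  · -- `t = log ((1 - a) / a)` minimises the Chernoff bound.
    have hratio : 1 ≤ (1 - a) / a := by rw [le_div_iff₀ ha_pos]; linarith
    have ht := exp_log (zero_lt_one.trans_le hratio)
    rw [← exp_neg_mul_half_mul_pow_eq_of_exp_eq ha_pos (by linarith) ht]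
    exact hchernoff _ (log_nonneg hratio)

lemma card_le_two_mul_card_ne_of_hammingDist_le {β : Type*} [Fintype ι] [DecidableEq β]
    {x y z : ι → β} (h : hammingDist x z ≤ hammingDist x y) :
    #{i | y i ≠ z i} ≤ 2 * #{i | y i ≠ z i ∧ x i ≠ y i} := by
  -- On `{i | y i ≠ z i}`, `x` differs from `y` or from `z`; off it both distances count alike.
  have hcover : #{i | y i ≠ z i} ≤ #{i | y i ≠ z i ∧ x i ≠ y i} + #{i | y i ≠ z i ∧ x i ≠ z i} := by
    simp only [card_filter, ← sum_add_distrib]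
    refine sum_le_sum fun i _ ↦ ?_
    by_cases hyz : y i = z i <;> by_cases hxy : x i = y i <;> simp_all
  have hsplit : hammingDist x z + #{i | y i ≠ z i ∧ x i ≠ y i} =
      hammingDist x y + #{i | y i ≠ z i ∧ x i ≠ z i} := by
    simp only [hammingDist, card_filter, ← sum_add_distrib]
    refine sum_congr rfl fun i _ ↦ ?_
    by_cases hyz : y i = z i <;> by_cases hxy : x i = y i <;> by_cases hxz : x i = z i <;> simp_all
  omega

lemma measureReal_hammingDist_le_hammingDist_le {β : Type*} [Fintype ι] [DecidableEq β]
    [MeasurableSpace β] [MeasurableSingletonClass β] {u : Ω → ι → β}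
    (hmeas : ∀ i, Measurable fun ω ↦ u ω i) (hindep : iIndepFun (fun i ω ↦ u ω i) μ) {y z : ι → β}
    (hcond : ∑ i ∈ {i | y i ≠ z i}, μ.real {ω | u ω i ≠ y i} < (#{i | y i ≠ z i} : ℝ) / 2) :
    μ.real {ω | hammingDist (u ω) z ≤ hammingDist (u ω) y} ≤
      (1 - ((∑ i ∈ {i | y i ≠ z i}, (2 * μ.real {ω | u ω i ≠ y i} - 1)) /
        #{i | y i ≠ z i}) ^ 2) ^ ((#{i | y i ≠ z i} : ℝ) / 2) := by
  set D : Finset ι := {i | y i ≠ z i}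
  set X : ι → Ω → ℝ := fun i ↦ {ω | u ω i ≠ y i}.indicator 1
  have hg : ∀ i, Measurable ({b | b ≠ y i}.indicator (1 : β → ℝ)) := fun i ↦
    measurable_const.indicator (measurableSet_singleton _).compl
  have hX01 : ∀ i ω, X i ω ∈ Set.Icc 0 1 := fun i ω ↦ by
    by_cases h : u ω i ≠ y i <;> simp [X, h]
  have hmean : ∀ i, μ[X i] = μ.real {ω | u ω i ≠ y i} := fun i ↦
    integral_indicator_one ((hmeas i) (measurableSet_singleton _).compl)
  have hXindep : iIndepFun X μ := hindep.comp _ hg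
  have hXmeas : ∀ i, Measurable (X i) := fun i ↦ (hg i).comp (hmeas i)
  have hsub : {ω | hammingDist (u ω) z ≤ hammingDist (u ω) y} ⊆
      {ω | (#D : ℝ) / 2 ≤ ∑ i ∈ D, X i ω} := fun ω hω ↦ by
    have hsum : ∑ i ∈ D, X i ω = #{i | y i ≠ z i ∧ u ω i ≠ y i} := by
      simp only [X, Set.indicator_apply, Set.mem_ofPred_eq, Pi.one_apply, sum_boole, D,
        filter_filter]
    have := card_le_two_mul_card_ne_of_hammingDist_le hω
    rw [Set.mem_ofPred_eq, hsum, div_le_iff₀ two_pos]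
    exact_mod_cast this.trans_eq (mul_comm _ _)
  simp only [← hmean] at hcond ⊢
  exact (measureReal_mono hsub).trans
    (hXindep.measureReal_sum_ge_half_card_le hXmeas hX01 hcond)

end

theorem stmt7 {Ω : Type*} [MeasurableSpace Ω] (μ : Measure Ω)
    [IsProbabilityMeasure μ] (n M : ℕ)
    (u : Ω → Fin n → Bool) (hmeas : ∀ i, Measurable fun ω => u ω i)
    (hindep : iIndepFun (fun i ω => u ω i) μ)
    (c : Fin M → Fin n → Bool) (j : Fin M)
    (dH : (Fin n → Bool) → (Fin n → Bool) → ℕ)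
    (hdH : ∀ x y, dH x y = (Finset.univ.filter fun i => x i ≠ y i).card)
    (D : Fin M → Finset (Fin n))
    (hD : ∀ l, D l = Finset.univ.filter fun i => c j i ≠ c l i)
    (q : Fin n → ℝ) (hq : ∀ i, q i = (μ {ω | u ω i ≠ c j i}).toReal)
    (hcond : ∀ l ∈ Finset.univ.erase j, ∑ i ∈ D l, q i < ((D l).card : ℝ) / 2)
    (lam : Fin M → ℝ)
    (hlam : ∀ l, lam l = (∑ i ∈ D l, (2 * q i - 1)) / ((D l).card : ℝ)) :
    (μ {ω | ∃ l, l ≠ j ∧ dH (u ω) (c l) ≤ dH (u ω) (c j)}).toReal ≤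
      ∑ l ∈ Finset.univ.erase j, (1 - lam l ^ 2) ^ (((D l).card : ℝ) / 2) := by
  obtain rfl : dH = hammingDist := funext₂ hdH
  obtain rfl : D = fun l ↦ ({i | c j i ≠ c l i} : Finset _) := funext hD
  obtain rfl : q = fun i ↦ μ.real {ω | u ω i ≠ c j i} := funext hq
  obtain rfl : lam = _ := funext hlam
  have hunion : {ω | ∃ l, l ≠ j ∧ hammingDist (u ω) (c l) ≤ hammingDist (u ω) (c j)} ⊆
      ⋃ l ∈ univ.erase j, {ω | hammingDist (u ω) (c l) ≤ hammingDist (u ω) (c j)} :=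
    fun ω ⟨l, hlj, hl⟩ ↦ Set.mem_biUnion (mem_erase.2 ⟨hlj, mem_univ l⟩) hl
  calc μ.real _ ≤ ∑ l ∈ univ.erase j,
        μ.real {ω | hammingDist (u ω) (c l) ≤ hammingDist (u ω) (c j)} :=
        (measureReal_mono hunion (measure_ne_top _ _)).trans (measureReal_biUnion_finset_le _ _)
    _ ≤ _ := sum_le_sum fun l hl ↦
        measureReal_hammingDist_le_hammingDist_le hmeas hindep (hcond l hl)
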